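/- Suppose β₁ = D(1 + O(Δx²)) and β₂ = D(1 + O(Δx²)) for some D > 0 independent of Δx (smooth case). Then τ₀ = |β₁ - β₂|² = O(Δx⁴)·D², and the nonlinear weights satisfy ω_n = γ_n + O(Δx⁴). -/

import Mathlib

/-- Unnormalized WENO-ZQ weight: `γ * (1 + τ₀ / (ε + β))`. -/
noncomputable def wenoBar (γ ε τ₀ β : ℝ) : ℝ := γ * (1 + τ₀ / (ε + β))

/-- Normalized WENO-ZQ nonlinear weight `ω₁` (the one associated to `γ₁`). -/
noncomputable def wenoOmega (γ₁ γ₂ ε τ₀ β₁ β₂ : ℝ) : ℝ :=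
  wenoBar γ₁ ε τ₀ β₁ / (wenoBar γ₁ ε τ₀ β₁ + wenoBar γ₂ ε τ₀ β₂)

lemma weno_key (γ₁ γ₂ ε τ βa βb : ℝ)
    (hγ₁ : 0 < γ₁) (hγ₂ : 0 < γ₂) (hsum : γ₁ + γ₂ = 1)
    (hε : 0 < ε) (hτ : 0 ≤ τ) (ha : 0 ≤ βa) (hb : 0 ≤ βb) :
    |wenoOmega γ₁ γ₂ ε τ βa βb - γ₁| ≤ τ * |βa - βb| / ε ^ 2 := by
  have hγ2 : γ₂ = 1 - γ₁ := by linarith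
  have hA : 0 < ε + βa := by positivity
  have hB : 0 < ε + βb := by positivity
  have hw1ge : γ₁ ≤ γ₁ * (1 + τ / (ε + βa)) := by
    have h0 : 0 ≤ τ / (ε + βa) := by positivity
    nlinarith
  have hw2ge : γ₂ ≤ γ₂ * (1 + τ / (ε + βb)) := by
    have h0 : 0 ≤ τ / (ε + βb) := by positivity
    nlinarith
  have hS : (1 : ℝ) ≤ γ₁ * (1 + τ / (ε + βa)) + γ₂ * (1 + τ / (ε + βb)) := by
    linarith
  have hSpos : (0 : ℝ) < γ₁ * (1 + τ / (ε + βa)) + γ₂ * (1 + τ / (ε + βb)) := by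
    linarith
  have hdiff : wenoOmega γ₁ γ₂ ε τ βa βb - γ₁ =
      (γ₁ * γ₂ * τ * ((ε + βb) - (ε + βa)) / ((ε + βa) * (ε + βb))) /
        (γ₁ * (1 + τ / (ε + βa)) + γ₂ * (1 + τ / (ε + βb))) := by
    unfold wenoOmega wenoBar
    rw [div_sub' (ne_of_gt hSpos)]
    congr 1
    rw [hγ2]; field_simp; ring
  rw [hdiff, abs_div, abs_of_pos hSpos]
  have h1 : |γ₁ * γ₂ * τ * ((ε + βb) - (ε + βa)) / ((ε + βa) * (ε + βb))| ≤
      τ * |βa - βb| / ε ^ 2 := by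
    rw [abs_div, abs_of_pos (by positivity : (0:ℝ) < (ε + βa) * (ε + βb))]
    have hba : |(ε + βb) - (ε + βa)| = |βa - βb| := by
      rw [← abs_neg]; ring_nf
    have hγle : γ₁ * γ₂ ≤ 1 := by nlinarith
    have hab : ε ^ 2 ≤ (ε + βa) * (ε + βb) := by nlinarith
    rw [abs_mul, abs_of_nonneg (by positivity : (0:ℝ) ≤ γ₁ * γ₂ * τ), hba]
    rw [div_le_div_iff₀ (by positivity) (by positivity)]
    have habs' : 0 ≤ |βa - βb| := abs_nonneg _
    have h2 : γ₁ * γ₂ * τ * |βa - βb| ≤ τ * |βa - βb| := by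
      nlinarith [mul_nonneg hτ habs']
    nlinarith [mul_nonneg hτ habs', mul_nonneg (mul_nonneg (le_of_lt (mul_pos hγ₁ hγ₂)) hτ) habs']
  calc |γ₁ * γ₂ * τ * ((ε + βb) - (ε + βa)) / ((ε + βa) * (ε + βb))| /
        (γ₁ * (1 + τ / (ε + βa)) + γ₂ * (1 + τ / (ε + βb)))
      ≤ |γ₁ * γ₂ * τ * ((ε + βb) - (ε + βa)) / ((ε + βa) * (ε + βb))| / 1 := by
        apply div_le_div_of_nonneg_left (abs_nonneg _) one_pos hS
    _ = |γ₁ * γ₂ * τ * ((ε + βb) - (ε + βa)) / ((ε + βa) * (ε + βb))| := by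
        rw [div_one]
    _ ≤ τ * |βa - βb| / ε ^ 2 := h1

theorem weno_zq_weight_fourth_order_accuracy
    (γ₁ γ₂ ε D C : ℝ)
    (hγ₁ : 0 < γ₁) (hγ₂ : 0 < γ₂) (hsum : γ₁ + γ₂ = 1)
    (hε : 0 < ε) (hD : 0 < D) (hC : 0 ≤ C)
    (β₁ β₂ : ℝ → ℝ)
    (hβ₁nn : ∀ h : ℝ, 0 < h → 0 ≤ β₁ h)
    (hβ₂nn : ∀ h : ℝ, 0 < h → 0 ≤ β₂ h)
    (hβ₁ : ∀ h : ℝ, 0 < h → |β₁ h - D| ≤ C * D * h ^ 2)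
    (hβ₂ : ∀ h : ℝ, 0 < h → |β₂ h - D| ≤ C * D * h ^ 2) :
    ∃ C' : ℝ, 0 < C' ∧ ∀ h : ℝ, 0 < h → h ≤ 1 →
      |β₁ h - β₂ h| ^ 2 ≤ C' * D ^ 2 * h ^ 4 ∧
      |wenoOmega γ₁ γ₂ ε (|β₁ h - β₂ h| ^ 2) (β₁ h) (β₂ h) - γ₁| ≤ C' * h ^ 4 ∧
      |wenoOmega γ₂ γ₁ ε (|β₁ h - β₂ h| ^ 2) (β₂ h) (β₁ h) - γ₂| ≤ C' * h ^ 4 := by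
  refine ⟨4 * C ^ 2 + 8 * C ^ 3 * D ^ 3 / ε ^ 2 + 1, by positivity, ?_⟩
  intro h hh hh1
  have hd : |β₁ h - β₂ h| ≤ 2 * C * D * h ^ 2 := by
    calc |β₁ h - β₂ h| = |(β₁ h - D) - (β₂ h - D)| := by ring_nf
      _ ≤ |β₁ h - D| + |β₂ h - D| := abs_sub (β₁ h - D) (β₂ h - D)
      _ ≤ 2 * C * D * h ^ 2 := by
          have := hβ₁ h hh; have := hβ₂ h hh; linarith
  have habs : 0 ≤ |β₁ h - β₂ h| := abs_nonneg _
  have hτ : |β₁ h - β₂ h| ^ 2 ≤ 4 * C ^ 2 * D ^ 2 * h ^ 4 := by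
    nlinarith
  have hτnn : 0 ≤ |β₁ h - β₂ h| ^ 2 := by positivity
  have h2le : h ^ 2 ≤ 1 := by nlinarith
  have h4pos : 0 < h ^ 4 := by positivity
  have hnum : |β₁ h - β₂ h| ^ 2 * |β₁ h - β₂ h| ≤ 8 * C ^ 3 * D ^ 3 * h ^ 4 := by
    calc |β₁ h - β₂ h| ^ 2 * |β₁ h - β₂ h|
        ≤ (4 * C ^ 2 * D ^ 2 * h ^ 4) * (2 * C * D * h ^ 2) :=
          mul_le_mul hτ hd habs (by nlinarith)
      _ = 8 * C ^ 3 * D ^ 3 * h ^ 4 * h ^ 2 := by ring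
      _ ≤ 8 * C ^ 3 * D ^ 3 * h ^ 4 * 1 := by
          have : 0 ≤ 8 * C ^ 3 * D ^ 3 * h ^ 4 := by positivity
          nlinarith
      _ = 8 * C ^ 3 * D ^ 3 * h ^ 4 := by ring
  have hbound : |β₁ h - β₂ h| ^ 2 * |β₁ h - β₂ h| / ε ^ 2 ≤
      8 * C ^ 3 * D ^ 3 / ε ^ 2 * h ^ 4 := by
    have heq : 8 * C ^ 3 * D ^ 3 / ε ^ 2 * h ^ 4 = 8 * C ^ 3 * D ^ 3 * h ^ 4 / ε ^ 2 := by
      ring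
    rw [heq]
    gcongr
  have hC'pos : (0:ℝ) ≤ (8 * C ^ 3 * D ^ 3 / ε ^ 2 + 1) * D ^ 2 * h ^ 4 := by positivity
  have hlast : 8 * C ^ 3 * D ^ 3 / ε ^ 2 * h ^ 4 ≤
      (4 * C ^ 2 + 8 * C ^ 3 * D ^ 3 / ε ^ 2 + 1) * h ^ 4 := by
    have : (0:ℝ) ≤ (4 * C ^ 2 + 1) * h ^ 4 := by positivity
    nlinarith
  refine ⟨by nlinarith, ?_, ?_⟩
  · have hk := weno_key γ₁ γ₂ ε (|β₁ h - β₂ h| ^ 2) (β₁ h) (β₂ h)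
      hγ₁ hγ₂ hsum hε hτnn (hβ₁nn h hh) (hβ₂nn h hh)
    calc |wenoOmega γ₁ γ₂ ε (|β₁ h - β₂ h| ^ 2) (β₁ h) (β₂ h) - γ₁|
        ≤ |β₁ h - β₂ h| ^ 2 * |β₁ h - β₂ h| / ε ^ 2 := hk
      _ ≤ 8 * C ^ 3 * D ^ 3 / ε ^ 2 * h ^ 4 := hbound
      _ ≤ (4 * C ^ 2 + 8 * C ^ 3 * D ^ 3 / ε ^ 2 + 1) * h ^ 4 := hlast
  · have hk := weno_key γ₂ γ₁ ε (|β₁ h - β₂ h| ^ 2) (β₂ h) (β₁ h)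
      hγ₂ hγ₁ (by linarith) hε hτnn (hβ₂nn h hh) (hβ₁nn h hh)
    have habs2 : |β₂ h - β₁ h| = |β₁ h - β₂ h| := abs_sub_comm _ _
    calc |wenoOmega γ₂ γ₁ ε (|β₁ h - β₂ h| ^ 2) (β₂ h) (β₁ h) - γ₂|
        ≤ |β₁ h - β₂ h| ^ 2 * |β₂ h - β₁ h| / ε ^ 2 := hk
      _ = |β₁ h - β₂ h| ^ 2 * |β₁ h - β₂ h| / ε ^ 2 := by rw [habs2]
      _ ≤ 8 * C ^ 3 * D ^ 3 / ε ^ 2 * h ^ 4 := hbound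
      _ ≤ (4 * C ^ 2 + 8 * C ^ 3 * D ^ 3 / ε ^ 2 + 1) * h ^ 4 := hlast
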